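/- arXiv:0811.0591 — 8 statements merged into one kernel-verified Lean document; each statement's English description precedes it below -/
import Mathlib

section
/- Let κ, v > 0, θ₁, θ₂ > 0, k ∈ (0,1) and C₁, C₂ > 0. For i = 1,2 define g_i(y) = C_i·y^{2κθ_i/v² − 1}·e^{−2κy/v²} for y > 0, set g(y) = k·g₁(y) + (1−k)·g₂(y), w(y) = k·g₁(y)/g(y), and define the drift α(y) = w(y)·κ(θ₁ − y) + (1 − w(y))·κ(θ₂ − y). Then g satisfies the stationary Fokker–Planck equation (v²/2)·(d²/dy²)(y·g(y)) − (d/dy)(α(y)·g(y)) = 0 for every y > 0. -/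
open Real Set

lemma aux_hasDerivAt (c p b : ℝ) {y : ℝ} (hy : 0 < y) :
    HasDerivAt (fun z : ℝ => c * z ^ p * Real.exp (-(b * z)))
      ((c * (p * y ^ (p - 1)) - b * (c * y ^ p)) * Real.exp (-(b * y))) y := by
  have h1 : HasDerivAt (fun z : ℝ => z ^ p) (p * y ^ (p - 1)) y :=
    Real.hasDerivAt_rpow_const (Or.inl hy.ne')
  have h2 : HasDerivAt (fun z : ℝ => Real.exp (-(b * z)))
      (Real.exp (-(b * y)) * -(b * 1)) y :=
    ((hasDerivAt_id y).const_mul b).neg.exp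
  have h3 : HasDerivAt (fun z : ℝ => c * z ^ p * Real.exp (-(b * z))) _ y := (h1.const_mul c).mul h2
  convert h3 using 1
  ring

/-- The convex mixture `g = k·g₁ + (1−k)·g₂` of two Gamma-type densities satisfies the
stationary Fokker–Planck equation `(v²/2)·(y·g(y))'' − (α(y)·g(y))' = 0` on `(0,∞)`,
where the drift `α` is the `w(y)`-weighted mixture of the two mean-reverting drifts
`κ(θᵢ − y)` with weight `w(y) = k·g₁(y)/g(y)`. -/
theorem stmt_1 (κ v θ₁ θ₂ k C₁ C₂ : ℝ) (hκ : 0 < κ) (hv : 0 < v)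
    (hθ₁ : 0 < θ₁) (hθ₂ : 0 < θ₂) (hk0 : 0 < k) (hk1 : k < 1)
    (hC₁ : 0 < C₁) (hC₂ : 0 < C₂)
    (g₁ g₂ g w α : ℝ → ℝ)
    (hg₁ : ∀ y : ℝ, 0 < y →
      g₁ y = C₁ * y ^ (2 * κ * θ₁ / v ^ 2 - 1) * Real.exp (-(2 * κ * y / v ^ 2)))
    (hg₂ : ∀ y : ℝ, 0 < y →
      g₂ y = C₂ * y ^ (2 * κ * θ₂ / v ^ 2 - 1) * Real.exp (-(2 * κ * y / v ^ 2)))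
    (hg : ∀ y : ℝ, 0 < y → g y = k * g₁ y + (1 - k) * g₂ y)
    (hw : ∀ y : ℝ, 0 < y → w y = k * g₁ y / g y)
    (hα : ∀ y : ℝ, 0 < y →
      α y = w y * (κ * (θ₁ - y)) + (1 - w y) * (κ * (θ₂ - y))) :
    ∀ y : ℝ, 0 < y →
      v ^ 2 / 2 * deriv (deriv (fun z => z * g z)) y
        - deriv (fun z => α z * g z) y = 0 := by
  intro y hy
  have hv2 : (v : ℝ) ^ 2 ≠ 0 := by positivity
  set a₁ : ℝ := 2 * κ * θ₁ / v ^ 2 with ha₁def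
  set a₂ : ℝ := 2 * κ * θ₂ / v ^ 2 with ha₂def
  set b : ℝ := 2 * κ / v ^ 2 with hbdef
  have harg : ∀ z : ℝ, (2 * κ * z / v ^ 2) = b * z := by
    intro z; rw [hbdef]; ring
  have hA1 : v ^ 2 / 2 * a₁ = κ * θ₁ := by rw [ha₁def]; field_simp
  have hA2 : v ^ 2 / 2 * a₂ = κ * θ₂ := by rw [ha₂def]; field_simp
  have hB : v ^ 2 / 2 * b = κ := by rw [hbdef]; field_simp
  clear_value a₁ a₂ b
  -- explicit forms
  set E : ℝ → ℝ := fun z => Real.exp (-(b * z)) with hEdef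
  set D : ℝ → ℝ := fun z =>
      (k * C₁ * (a₁ * z ^ (a₁ - 1)) - b * (k * C₁ * z ^ a₁)) * E z
    + ((1 - k) * C₂ * (a₂ * z ^ (a₂ - 1)) - b * ((1 - k) * C₂ * z ^ a₂)) * E z
    with hDdef
  -- positivity of gᵢ, g on (0,∞)
  have hg₁pos : ∀ z : ℝ, 0 < z → 0 < g₁ z := by
    intro z hz; rw [hg₁ z hz]; positivity
  have hg₂pos : ∀ z : ℝ, 0 < z → 0 < g₂ z := by
    intro z hz; rw [hg₂ z hz]; positivity
  have hgpos : ∀ z : ℝ, 0 < z → 0 < g z := by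
    intro z hz
    rw [hg z hz]
    have := hg₁pos z hz; have := hg₂pos z hz
    have h1k : 0 < 1 - k := by linarith
    positivity
  -- rpow splitting
  have hsplit : ∀ (p : ℝ) (z : ℝ), 0 < z → z ^ p = z ^ (p - 1) * z := by
    intro p z hz
    rw [← Real.rpow_add_one hz.ne', sub_add_cancel]
  -- z * g z = F z on Ioi 0
  have hF : ∀ z ∈ Ioi (0:ℝ), z * g z
      = k * C₁ * z ^ a₁ * E z + (1 - k) * C₂ * z ^ a₂ * E z := by
    intro z hz
    rw [hg z hz, hg₁ z hz, hg₂ z hz, harg z, hsplit a₁ z hz, hsplit a₂ z hz]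
    simp only [hEdef]
    ring
  -- derivative of z*g z on Ioi 0 is D
  have hFd : ∀ z ∈ Ioi (0:ℝ), HasDerivAt (fun t => t * g t) (D z) z := by
    intro z hz
    have h1 := aux_hasDerivAt (k * C₁) a₁ b hz
    have h2 := aux_hasDerivAt ((1 - k) * C₂) a₂ b hz
    have h3 := h1.add h2
    have heq : (fun t => t * g t) =ᶠ[nhds z]
        (fun t => k * C₁ * t ^ a₁ * Real.exp (-(b * t))
          + (1 - k) * C₂ * t ^ a₂ * Real.exp (-(b * t))) := by
      filter_upwards [isOpen_Ioi.mem_nhds hz] with t ht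
      exact hF t ht
    exact (h3.congr_of_eventuallyEq heq)
  have hderivF : ∀ z ∈ Ioi (0:ℝ), deriv (fun t => t * g t) z = D z := by
    intro z hz; exact (hFd z hz).deriv
  -- α z * g z = v^2/2 * D z on Ioi 0
  have hαg : ∀ z ∈ Ioi (0:ℝ), α z * g z = v ^ 2 / 2 * D z := by
    intro z hz
    have hgz := (hgpos z hz).ne'
    have hwg : w z * g z = k * g₁ z := by
      rw [hw z hz]; field_simp
    have step : α z * g z
        = k * g₁ z * (κ * (θ₁ - z)) + (1 - k) * g₂ z * (κ * (θ₂ - z)) := by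
      rw [hα z hz]
      have hgz' : g z = k * g₁ z + (1 - k) * g₂ z := hg z hz
      calc (w z * (κ * (θ₁ - z)) + (1 - w z) * (κ * (θ₂ - z))) * g z
          = (w z * g z) * (κ * (θ₁ - z)) + (g z - w z * g z) * (κ * (θ₂ - z)) := by ring
        _ = k * g₁ z * (κ * (θ₁ - z)) + (1 - k) * g₂ z * (κ * (θ₂ - z)) := by
            rw [hwg, hgz']; ring
    rw [step, hg₁ z hz, hg₂ z hz, harg z, hDdef]
    simp only [hEdef]
    rw [hsplit a₁ z hz, hsplit a₂ z hz]
    set P₁ := z ^ (a₁ - 1)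
    set P₂ := z ^ (a₂ - 1)
    set Ez := Real.exp (-(b * z))
    linear_combination (-(k * C₁ * P₁ * Ez)) * hA1 + (-((1 - k) * C₂ * P₂ * Ez)) * hA2
      + (k * C₁ * P₁ * z * Ez + (1 - k) * C₂ * P₂ * z * Ez) * hB
  -- D is differentiable at y
  have hDdiff : DifferentiableAt ℝ D y := by
    have hE : DifferentiableAt ℝ E y := by
      simp only [hEdef]
      exact (Real.differentiable_exp.comp ((differentiable_id.const_mul b).neg)).differentiableAt
    have hp : ∀ p : ℝ, DifferentiableAt ℝ (fun z : ℝ => z ^ p) y := fun p =>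
      (Real.hasDerivAt_rpow_const (Or.inl hy.ne')).differentiableAt
    simp only [hDdef]
    have t1 := ((((hp (a₁-1)).const_mul a₁).const_mul (k*C₁)).sub
      (((hp a₁).const_mul (k*C₁)).const_mul b)).mul hE
    have t2 := ((((hp (a₂-1)).const_mul a₂).const_mul ((1-k)*C₂)).sub
      (((hp a₂).const_mul ((1-k)*C₂)).const_mul b)).mul hE
    exact t1.add t2
  -- second derivative equals deriv D y
  have h2nd : deriv (deriv (fun z => z * g z)) y = deriv D y := by
    apply Filter.EventuallyEq.deriv_eq
    filter_upwards [isOpen_Ioi.mem_nhds hy] with t ht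
    exact hderivF t ht
  -- deriv of α*g equals v^2/2 * deriv D y
  have hαgd : deriv (fun z => α z * g z) y = v ^ 2 / 2 * deriv D y := by
    have heq : (fun z => α z * g z) =ᶠ[nhds y] (fun z => v ^ 2 / 2 * D z) := by
      filter_upwards [isOpen_Ioi.mem_nhds hy] with t ht
      exact hαg t ht
    rw [heq.deriv_eq, deriv_const_mul _ hDdiff]
  rw [h2nd, hαgd]
  ring
end

section
/- Let κ, v > 0, θ₁, θ₂ > 0 with θ₁ < θ₂, k ∈ (0,1) and C₁, C₂ > 0. For i = 1,2 define g_i(y) = C_i·y^{2κθ_i/v² − 1}·e^{−2κy/v²} for y > 0, w(y) = k·g₁(y)/(k·g₁(y) + (1−k)·g₂(y)), and α(y) = w(y)·κ(θ₁ − y) + (1 − w(y))·κ(θ₂ − y). Then lim_{y→0+} α(y) = κ·θ₁ = κ·min(θ₁, θ₂). Moreover, if in addition 2κθ_i > v² for i = 1,2, then 2·(κθ₁)/v² > 1. -/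
open Real Set Filter Topology

/-- The mixture drift `α(y) = w(y)·κ(θ₁ − y) + (1 − w(y))·κ(θ₂ − y)` with
`w(y) = k·g₁(y)/(k·g₁(y) + (1−k)·g₂(y))` and `θ₁ < θ₂` satisfies
`lim_{y→0+} α(y) = κθ₁ = κ·min(θ₁,θ₂)`; moreover if `2κθᵢ > v²` for `i = 1,2`
then `2κθ₁/v² > 1`. -/
theorem stmt_2 (κ v θ₁ θ₂ k C₁ C₂ : ℝ) (hκ : 0 < κ) (hv : 0 < v)
    (hθ₁ : 0 < θ₁) (hθ₂ : 0 < θ₂) (hθ : θ₁ < θ₂) (hk0 : 0 < k) (hk1 : k < 1)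
    (hC₁ : 0 < C₁) (hC₂ : 0 < C₂)
    (g₁ g₂ w α : ℝ → ℝ)
    (hg₁ : ∀ y : ℝ, 0 < y →
      g₁ y = C₁ * y ^ (2 * κ * θ₁ / v ^ 2 - 1) * Real.exp (-(2 * κ * y / v ^ 2)))
    (hg₂ : ∀ y : ℝ, 0 < y →
      g₂ y = C₂ * y ^ (2 * κ * θ₂ / v ^ 2 - 1) * Real.exp (-(2 * κ * y / v ^ 2)))
    (hw : ∀ y : ℝ, 0 < y → w y = k * g₁ y / (k * g₁ y + (1 - k) * g₂ y))
    (hα : ∀ y : ℝ, 0 < y →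
      α y = w y * (κ * (θ₁ - y)) + (1 - w y) * (κ * (θ₂ - y))) :
    Tendsto α (𝓝[>] (0:ℝ)) (𝓝 (κ * θ₁)) ∧
    κ * θ₁ = κ * min θ₁ θ₂ ∧
    ((2 * κ * θ₁ > v ^ 2 ∧ 2 * κ * θ₂ > v ^ 2) → 2 * (κ * θ₁) / v ^ 2 > 1) := by
  have hv2 : (0:ℝ) < v ^ 2 := by positivity
  set δ : ℝ := 2 * κ * (θ₂ - θ₁) / v ^ 2 with hδdef
  have hδ : 0 < δ := by
    apply div_pos _ hv2
    have : 0 < θ₂ - θ₁ := by linarith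
    positivity
  set W : ℝ → ℝ := fun y => k * C₁ / (k * C₁ + (1 - k) * C₂ * y ^ δ) with hWdef
  have hk1' : (0:ℝ) < 1 - k := by linarith
  -- w y = W y for y > 0
  have hwW : ∀ y : ℝ, 0 < y → w y = W y := by
    intro y hy
    have hE : 0 < Real.exp (-(2 * κ * y / v ^ 2)) := Real.exp_pos _
    have hpow : 0 < y ^ (2 * κ * θ₁ / v ^ 2 - 1) := Real.rpow_pos_of_pos hy _
    have hsplit : y ^ (2 * κ * θ₂ / v ^ 2 - 1)
        = y ^ (2 * κ * θ₁ / v ^ 2 - 1) * y ^ δ := by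
      rw [← Real.rpow_add hy]
      congr 1
      rw [hδdef]
      field_simp [hδdef]
      ring
    rw [hw y hy, hg₁ y hy, hg₂ y hy, hsplit]
    have h1 : k * (C₁ * y ^ (2 * κ * θ₁ / v ^ 2 - 1) * Real.exp (-(2 * κ * y / v ^ 2)))
        = (k * C₁) * (y ^ (2 * κ * θ₁ / v ^ 2 - 1) * Real.exp (-(2 * κ * y / v ^ 2))) := by
      ring
    have h2 : (k * C₁) * (y ^ (2 * κ * θ₁ / v ^ 2 - 1) * Real.exp (-(2 * κ * y / v ^ 2)))
        + (1 - k) * (C₂ * (y ^ (2 * κ * θ₁ / v ^ 2 - 1) * y ^ δ) * Real.exp (-(2 * κ * y / v ^ 2)))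
        = (k * C₁ + (1 - k) * C₂ * y ^ δ)
          * (y ^ (2 * κ * θ₁ / v ^ 2 - 1) * Real.exp (-(2 * κ * y / v ^ 2))) := by
      ring
    rw [h1, h2, mul_div_mul_right _ _ (by positivity)]
  -- limit of W as y → 0+
  have hpowlim : Tendsto (fun y : ℝ => y ^ δ) (𝓝[>] (0:ℝ)) (𝓝 0) := by
    have hc : ContinuousAt (fun y : ℝ => y ^ δ) 0 :=
      Real.continuousAt_rpow_const 0 δ (Or.inr hδ.le)
    have := hc.tendsto
    rw [Real.zero_rpow hδ.ne'] at this
    exact this.mono_left nhdsWithin_le_nhds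
  have hden : Tendsto (fun y : ℝ => k * C₁ + (1 - k) * C₂ * y ^ δ) (𝓝[>] (0:ℝ))
      (𝓝 (k * C₁)) := by
    have : Tendsto (fun y : ℝ => k * C₁ + (1 - k) * C₂ * y ^ δ) (𝓝[>] (0:ℝ))
        (𝓝 (k * C₁ + (1 - k) * C₂ * 0)) :=
      tendsto_const_nhds.add (tendsto_const_nhds.mul hpowlim)
    simpa using this
  have hWlim : Tendsto W (𝓝[>] (0:ℝ)) (𝓝 1) := by
    have h := (tendsto_const_nhds (x := k * C₁) (f := 𝓝[>] (0:ℝ))).div hden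
      (by positivity)
    have : k * C₁ / (k * C₁) = 1 := div_self (by positivity)
    rwa [this] at h
  -- limit of α
  have hid : Tendsto (fun y : ℝ => y) (𝓝[>] (0:ℝ)) (𝓝 0) :=
    tendsto_id.mono_left nhdsWithin_le_nhds
  have hαlim : Tendsto (fun y : ℝ =>
      W y * (κ * (θ₁ - y)) + (1 - W y) * (κ * (θ₂ - y))) (𝓝[>] (0:ℝ))
      (𝓝 (κ * θ₁)) := by
    have : Tendsto (fun y : ℝ =>
        W y * (κ * (θ₁ - y)) + (1 - W y) * (κ * (θ₂ - y))) (𝓝[>] (0:ℝ))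
        (𝓝 (1 * (κ * (θ₁ - 0)) + (1 - 1) * (κ * (θ₂ - 0)))) := by
      exact (hWlim.mul (tendsto_const_nhds.mul (tendsto_const_nhds.sub hid))).add
        ((tendsto_const_nhds.sub hWlim).mul
          (tendsto_const_nhds.mul (tendsto_const_nhds.sub hid)))
    simpa using this
  refine ⟨?_, ?_, ?_⟩
  · apply hαlim.congr'
    filter_upwards [self_mem_nhdsWithin] with y hy
    rw [hα y hy, hwW y hy]
  · rw [min_eq_left hθ.le]
  · rintro ⟨h1, _⟩
    rw [gt_iff_lt, lt_div_iff₀ hv2, one_mul]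
    linarith
end

section
/- Let v > 0, C > 0 and let α : (0,∞) → ℝ be continuous. Define g(y) = C·y^{−1}·exp((2/v²)·∫₁^y α(ξ)/ξ dξ) for y > 0. Then g is continuously differentiable on (0,∞) and satisfies the zero-flux relation (v²/2)·(d/dy)(y·g(y)) = α(y)·g(y) for every y > 0. If moreover α is continuously differentiable on (0,∞), then g solves the stationary Fokker–Planck equation (v²/2)·(d²/dy²)(y·g(y)) − (d/dy)(α(y)·g(y)) = 0 on (0,∞). -/
open Real Set

/-- For a continuous drift `α` on `(0,∞)`, the function
`g(y) = C·y⁻¹·exp((2/v²)·∫₁^y α(ξ)/ξ dξ)` is `C¹` on `(0,∞)` and satisfies the zero-flux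
relation `(v²/2)·(y·g(y))' = α(y)·g(y)` there; if moreover `α` is `C¹` on `(0,∞)`, then `g`
solves the stationary Fokker–Planck equation `(v²/2)·(y·g(y))'' − (α(y)·g(y))' = 0`
on `(0,∞)`. -/
theorem stmt_4 (v C : ℝ) (hv : 0 < v) (hC : 0 < C)
    (α : ℝ → ℝ) (hα : ContinuousOn α (Set.Ioi 0))
    (g : ℝ → ℝ)
    (hg : ∀ y : ℝ, 0 < y →
      g y = C * y⁻¹ * Real.exp ((2 / v ^ 2) * ∫ ξ in (1:ℝ)..y, α ξ / ξ)) :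
    ContDiffOn ℝ 1 g (Set.Ioi 0) ∧
    (∀ y : ℝ, 0 < y →
      v ^ 2 / 2 * deriv (fun z => z * g z) y = α y * g y) ∧
    (ContDiffOn ℝ 1 α (Set.Ioi 0) →
      ∀ y : ℝ, 0 < y →
        v ^ 2 / 2 * deriv (deriv (fun z => z * g z)) y
          - deriv (fun z => α z * g z) y = 0) := by
  have hv2 : (v:ℝ) ^ 2 ≠ 0 := by positivity
  set h : ℝ → ℝ := fun ξ => α ξ / ξ with hh
  have hhcont : ContinuousOn h (Set.Ioi 0) :=
    hα.div continuousOn_id (fun x hx => ne_of_gt hx)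
  set F : ℝ → ℝ := fun y => (2 / v ^ 2) * ∫ ξ in (1:ℝ)..y, h ξ with hF
  have hFd : ∀ y : ℝ, 0 < y → HasDerivAt F ((2 / v ^ 2) * h y) y := by
    intro y hy
    have hint : IntervalIntegrable h MeasureTheory.volume 1 y := by
      apply ContinuousOn.intervalIntegrable
      apply hhcont.mono
      intro x hx
      rcases le_total (1:ℝ) y with hc | hc
      · rw [Set.uIcc_of_le hc] at hx; exact lt_of_lt_of_le one_pos hx.1
      · rw [Set.uIcc_of_ge hc] at hx; exact lt_of_lt_of_le hy hx.1
    have hmeas : StronglyMeasurableAtFilter h (nhds y) MeasureTheory.volume :=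
      hhcont.stronglyMeasurableAtFilter isOpen_Ioi y hy
    have hca : ContinuousAt h y :=
      hhcont.continuousAt (isOpen_Ioi.mem_nhds hy)
    exact (intervalIntegral.integral_hasDerivAt_right hint hmeas hca).const_mul _
  set G : ℝ → ℝ := fun y => C * Real.exp (F y) with hG
  have hGd : ∀ y : ℝ, 0 < y →
      HasDerivAt G (C * (Real.exp (F y) * ((2 / v ^ 2) * h y))) y := by
    intro y hy
    exact (((hFd y hy).exp).const_mul C)
  have hgG : ∀ y : ℝ, 0 < y → y * g y = G y := by
    intro y hy
    rw [hg y hy, hG]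
    simp only [hF]
    have : (y : ℝ) ≠ 0 := ne_of_gt hy
    field_simp
  have hderiv : ∀ y : ℝ, 0 < y →
      deriv (fun z => z * g z) y = C * (Real.exp (F y) * ((2 / v ^ 2) * h y)) := by
    intro y hy
    have hev : (fun z => z * g z) =ᶠ[nhds y] G := by
      filter_upwards [isOpen_Ioi.mem_nhds hy] with z hz using hgG z hz
    rw [hev.deriv_eq]
    exact (hGd y hy).deriv
  have key2 : ∀ y : ℝ, 0 < y →
      v ^ 2 / 2 * deriv (fun z => z * g z) y = α y * g y := by
    intro y hy
    rw [hderiv y hy, hg y hy, hh]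
    simp only [hF]
    have : (y : ℝ) ≠ 0 := ne_of_gt hy
    field_simp
    ring
  refine ⟨?_, key2, ?_⟩
  · -- ContDiffOn g
    have hFc : ContDiffOn ℝ 1 F (Set.Ioi 0) := by
      apply (contDiffOn_succ_iff_deriv_of_isOpen (n := 0) isOpen_Ioi).2
      refine ⟨fun y hy => ((hFd y hy).differentiableAt).differentiableWithinAt, by simp, ?_⟩
      rw [contDiffOn_zero]
      apply (continuousOn_const.mul hhcont).congr
      intro y hy
      exact (hFd y hy).deriv
    have : ContDiffOn ℝ 1 (fun y : ℝ => C * y⁻¹ * Real.exp (F y)) (Set.Ioi 0) := by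
      apply ContDiffOn.mul
      · exact contDiffOn_const.mul (ContDiffOn.inv contDiffOn_id (fun x hx => ne_of_gt hx))
      · exact hFc.exp
    exact this.congr (fun y hy => hg y hy)
  · intro _ y hy
    have hev2 : deriv (fun z => z * g z) =ᶠ[nhds y]
        (fun z => 2 / v ^ 2 * (α z * g z)) := by
      filter_upwards [isOpen_Ioi.mem_nhds hy] with z hz
      have hz2 := key2 z hz
      field_simp at hz2 ⊢
      linarith [hz2]
    rw [hev2.deriv_eq, deriv_const_mul_field]
    field_simp
    ring
end

section
/- Let v > 0 and let α satisfy hypothesis (A): α is continuously differentiable on [0,∞), 2α(0)/v² > 1, and limsup_{y→∞} α(y)/y < 0. Define g(y) = y^{−1}·exp((2/v²)·∫₁^y α(ξ)/ξ dξ) for y > 0. Then lim_{y→0+} g(y) = 0 and ∫₀^∞ g(y) dy < ∞; in particular g can be normalized to a probability density on (0,∞). -/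
open Real Set Filter Topology MeasureTheory

/-- Under hypothesis (A) on the drift `α` (`α ∈ C¹([0,∞))`, `2α(0)/v² > 1`,
`limsup_{y→∞} α(y)/y < 0`), the explicit solution
`g(y) = y⁻¹·exp((2/v²)·∫₁^y α(ξ)/ξ dξ)` of the stationary Fokker–Planck equation
satisfies `lim_{y→0+} g(y) = 0` and `∫₀^∞ g(y) dy < ∞`; in particular `g` can be
normalized to a probability density on `(0,∞)`. -/
theorem stmt_5 (v : ℝ) (hv : 0 < v)
    (α : ℝ → ℝ) (hα : ContDiffOn ℝ 1 α (Set.Ici 0))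
    (hα0 : 2 * α 0 / v ^ 2 > 1)
    (hlimsup : ∃ c : ℝ, c < 0 ∧ ∀ᶠ y in atTop, α y / y ≤ c)
    (g : ℝ → ℝ)
    (hg : ∀ y : ℝ, 0 < y →
      g y = y⁻¹ * Real.exp ((2 / v ^ 2) * ∫ ξ in (1:ℝ)..y, α ξ / ξ)) :
    Tendsto g (𝓝[>] (0:ℝ)) (𝓝 0) ∧
    MeasureTheory.IntegrableOn g (Set.Ioi 0) ∧
    ∃ c : ℝ, 0 < c ∧ ∫ y in Set.Ioi (0:ℝ), c * g y = 1 := by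
  obtain ⟨c0, hc0, hev⟩ := hlimsup
  have hv2 : (0:ℝ) < v ^ 2 := by positivity
  set β : ℝ := 2 / v ^ 2 with hβdef
  have hβpos : 0 < β := by positivity
  have hp : 0 < β * α 0 - 1 := by
    have h1 : 1 < 2 * α 0 / v ^ 2 := hα0
    have : β * α 0 = 2 * α 0 / v ^ 2 := by rw [hβdef]; ring
    linarith [this ▸ h1]
  have hαc : ContinuousOn α (Ici 0) := hα.continuousOn
  set f : ℝ → ℝ := fun ξ => α ξ / ξ with hfdef
  have hfcont : ContinuousOn f (Ioi 0) := by
    apply ContinuousOn.div (hαc.mono (fun x (hx : x ∈ Ioi (0:ℝ)) => mem_Ici.mpr (le_of_lt hx))) continuousOn_id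
    exact fun x hx => ne_of_gt hx
  have huIcc : ∀ a b : ℝ, 0 < a → 0 < b → uIcc a b ⊆ Ioi 0 := by
    intro a b ha hb x hx
    rcases mem_uIcc.mp hx with ⟨h1, _⟩ | ⟨h1, _⟩ <;> [exact lt_of_lt_of_le ha h1;
      exact lt_of_lt_of_le hb h1]
  have hfint : ∀ a b : ℝ, 0 < a → 0 < b → IntervalIntegrable f volume a b := by
    intro a b ha hb
    exact (hfcont.mono (huIcc a b ha hb)).intervalIntegrable
  set F : ℝ → ℝ := fun y => ∫ ξ in (1:ℝ)..y, f ξ with hFdef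
  have hFderiv : ∀ y : ℝ, 0 < y → HasDerivAt F (f y) y := by
    intro y hy
    have hcont : ContinuousAt f y := hfcont.continuousAt (Ioi_mem_nhds hy)
    exact intervalIntegral.integral_hasDerivAt_right (hfint 1 y one_pos hy)
      ⟨Ioi 0, Ioi_mem_nhds hy, hfcont.aestronglyMeasurable measurableSet_Ioi⟩ hcont
  have hFcont : ContinuousOn F (Ioi 0) := fun y hy =>
    ((hFderiv y hy).continuousAt).continuousWithinAt
  have hgeq : ∀ y : ℝ, 0 < y → g y = y⁻¹ * Real.exp (β * F y) := hg
  have hgcont : ContinuousOn g (Ioi 0) := by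
    have h1 : ContinuousOn (fun y : ℝ => y⁻¹ * Real.exp (β * F y)) (Ioi 0) := by
      apply ContinuousOn.mul
      · exact continuousOn_id.inv₀ (fun x hx => ne_of_gt hx)
      · exact (Real.continuous_exp.comp_continuousOn (hFcont.const_smul β))
    exact h1.congr (fun y hy => hgeq y hy)
  have hgpos : ∀ y : ℝ, 0 < y → 0 < g y := by
    intro y hy; rw [hgeq y hy]; positivity
  -- Lipschitz bound near zero
  have hUD : UniqueDiffOn ℝ (Ici (0:ℝ)) := uniqueDiffOn_Ici 0
  have hdc : ContinuousOn (derivWithin α (Ici 0)) (Ici 0) :=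
    hα.continuousOn_derivWithin hUD le_rfl
  obtain ⟨L, hL⟩ := (isCompact_Icc (a := (0:ℝ)) (b := 1)).exists_bound_of_continuousOn
    (hdc.mono (Icc_subset_Ici_self))
  have hLnn : 0 ≤ L := le_trans (norm_nonneg _) (hL 0 ⟨le_refl 0, zero_le_one⟩)
  have hdiff : DifferentiableOn ℝ α (Ici 0) := hα.differentiableOn one_ne_zero
  have hMVT : ∀ ξ ∈ Icc (0:ℝ) 1, |α ξ - α 0| ≤ L * ξ := by
    intro ξ hξ
    have := (convex_Icc (0:ℝ) 1).norm_image_sub_le_of_norm_hasDerivWithin_le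
      (f := α) (f' := derivWithin α (Ici 0)) (C := L)
      (fun x hx => ((hdiff x (hx.1 : (0:ℝ) ≤ x)).hasDerivWithinAt).mono Icc_subset_Ici_self)
      (fun x hx => hL x hx) ⟨le_refl 0, zero_le_one⟩ hξ
    simpa [Real.norm_eq_abs, abs_of_nonneg hξ.1] using this
  -- splitting F near zero
  have hsplit : ∀ y : ℝ, 0 < y →
      F y = α 0 * Real.log y + ∫ ξ in (1:ℝ)..y, (α ξ - α 0) / ξ := by
    intro y hy
    have hsub : uIcc 1 y ⊆ Ioi 0 := huIcc 1 y one_pos hy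
    have h1 : IntervalIntegrable (fun ξ => α 0 / ξ) volume 1 y := by
      apply ContinuousOn.intervalIntegrable
      exact ContinuousOn.div continuousOn_const continuousOn_id
        (fun x hx => ne_of_gt (hsub hx))
    have h2 : IntervalIntegrable (fun ξ => (α ξ - α 0) / ξ) volume 1 y := by
      apply ContinuousOn.intervalIntegrable
      apply ContinuousOn.div _ continuousOn_id (fun x hx => ne_of_gt (hsub hx))
      exact ((hαc.mono (fun x hx => mem_Ici.mpr (le_of_lt (hsub hx)))).sub continuousOn_const)
    have heq : F y = (∫ ξ in (1:ℝ)..y, α 0 / ξ) + ∫ ξ in (1:ℝ)..y, (α ξ - α 0) / ξ := by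
      rw [← intervalIntegral.integral_add h1 h2]
      apply intervalIntegral.integral_congr
      intro ξ hξ
      have hξ0 : ξ ≠ 0 := ne_of_gt (hsub hξ)
      simp only [hfdef]
      field_simp
      ring
    rw [heq]
    congr 1
    have h0 : (0:ℝ) ∉ uIcc 1 y := fun h => lt_irrefl (0:ℝ) (mem_Ioi.mp (hsub h))
    rw [show (fun ξ : ℝ => α 0 / ξ) = fun ξ : ℝ => α 0 * (1 / ξ) by funext ξ; ring]
    rw [intervalIntegral.integral_const_mul, integral_one_div h0, div_one]
  -- bound on remainder integral on (0,1]
  have hhb : ∀ y ∈ Ioc (0:ℝ) 1, |∫ ξ in (1:ℝ)..y, (α ξ - α 0) / ξ| ≤ L := by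
    intro y hy
    have hbd : ∀ ξ ∈ Set.uIoc (1:ℝ) y, ‖(α ξ - α 0) / ξ‖ ≤ L := by
      intro ξ hξ
      have hξm : y < ξ ∧ ξ ≤ 1 := by
        rcases Set.mem_uIoc.mp hξ with ⟨h1, h2⟩ | ⟨h1, h2⟩
        · exact absurd (lt_of_lt_of_le h1 (h2.trans hy.2)) (lt_irrefl 1)
        · exact ⟨h1, h2⟩
      have hξpos : 0 < ξ := lt_trans hy.1 hξm.1
      have hm := hMVT ξ ⟨le_of_lt hξpos, hξm.2⟩
      rw [Real.norm_eq_abs, abs_div, abs_of_pos hξpos]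
      rw [div_le_iff₀ hξpos]
      linarith [hm]
    have := intervalIntegral.norm_integral_le_of_norm_le_const hbd
    have habs : |y - 1| ≤ 1 := by
      rw [abs_le]; constructor <;> [linarith [hy.1]; linarith [hy.2]]
    calc |∫ ξ in (1:ℝ)..y, (α ξ - α 0) / ξ| ≤ L * |y - 1| := this
      _ ≤ L * 1 := by exact mul_le_mul_of_nonneg_left habs hLnn
      _ = L := mul_one L
  -- bound on g near zero
  have hgle : ∀ y ∈ Ioc (0:ℝ) 1,
      g y ≤ Real.exp (β * L) * Real.exp ((β * α 0 - 1) * Real.log y) := by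
    intro y hy
    set H := ∫ ξ in (1:ℝ)..y, (α ξ - α 0) / ξ with hHdef
    have hH := hhb y hy
    rw [hgeq y hy.1, hsplit y hy.1]
    have hy1 : y⁻¹ = Real.exp (-Real.log y) := by
      rw [Real.exp_neg, Real.exp_log hy.1]
    rw [hy1, ← Real.exp_add, ← Real.exp_add]
    apply Real.exp_le_exp.mpr
    have hkey : -Real.log y + β * (α 0 * Real.log y + H) =
        (β * α 0 - 1) * Real.log y + β * H := by ring
    rw [hkey]
    have : β * H ≤ β * L := mul_le_mul_of_nonneg_left (abs_le.mp hH).2 (le_of_lt hβpos)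
    linarith
  -- Tendsto part
  have hmem : Ioc (0:ℝ) 1 ∈ 𝓝[>] (0:ℝ) := Ioc_mem_nhdsGT_of_mem ⟨le_refl 0, one_pos⟩
  have htend : Tendsto g (𝓝[>] (0:ℝ)) (𝓝 0) := by
    apply squeeze_zero'
    · filter_upwards [hmem] with y hy using le_of_lt (hgpos y hy.1)
    · filter_upwards [hmem] with y hy using hgle y hy
    · have h1 : Tendsto (fun y : ℝ => (β * α 0 - 1) * Real.log y) (𝓝[>] (0:ℝ)) atBot :=
        (Real.tendsto_log_nhdsGT_zero).const_mul_atBot hp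
      have h2 : Tendsto (fun y : ℝ => Real.exp ((β * α 0 - 1) * Real.log y))
          (𝓝[>] (0:ℝ)) (𝓝 0) := Real.tendsto_exp_atBot.comp h1
      have := h2.const_mul (Real.exp (β * L))
      simpa using this
  -- Integrability
  obtain ⟨N, hN⟩ := eventually_atTop.mp hev
  set y₀ : ℝ := max N 1 with hy₀def
  have hy₀1 : (1:ℝ) ≤ y₀ := le_max_right N 1
  have hy₀pos : (0:ℝ) < y₀ := lt_of_lt_of_le one_pos hy₀1
  have hN' : ∀ y : ℝ, y₀ ≤ y → α y / y ≤ c0 := fun y hy =>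
    hN y (le_trans (le_max_left N 1) hy)
  -- near-zero integrability
  have hnear : IntegrableOn g (Ioc 0 1) := by
    have hmeas : AEStronglyMeasurable g (volume.restrict (Ioc (0:ℝ) 1)) :=
      (hgcont.mono (fun x hx => hx.1)).aestronglyMeasurable measurableSet_Ioc
    have hbd : IntegrableOn (fun _ : ℝ => Real.exp (β * L)) (Ioc (0:ℝ) 1) :=
      (integrableOn_const_iff).mpr (Or.inr measure_Ioc_lt_top)
    apply hbd.mono' hmeas
    filter_upwards [ae_restrict_mem measurableSet_Ioc] with y hy
    rw [Real.norm_eq_abs, abs_of_pos (hgpos y hy.1)]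
    have h1 := hgle y hy
    have h2 : (β * α 0 - 1) * Real.log y ≤ 0 := by
      apply mul_nonpos_of_nonneg_of_nonpos (le_of_lt hp)
      exact Real.log_nonpos (le_of_lt hy.1) hy.2
    calc g y ≤ Real.exp (β * L) * Real.exp ((β * α 0 - 1) * Real.log y) := h1
      _ ≤ Real.exp (β * L) * 1 := by
          exact mul_le_mul_of_nonneg_left (Real.exp_le_one_iff.mpr h2) (Real.exp_pos _).le
      _ = Real.exp (β * L) := mul_one _
  -- middle part
  have hmid : IntegrableOn g (Ioc 1 y₀) := by
    have : IntegrableOn g (Icc 1 y₀) :=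
      (hgcont.mono (fun x hx => lt_of_lt_of_le one_pos hx.1)).integrableOn_Icc
    exact this.mono_set Ioc_subset_Icc_self
  -- tail
  have hFtail : ∀ y : ℝ, y₀ ≤ y → F y ≤ F y₀ + c0 * (y - y₀) := by
    intro y hy
    have hadd : (∫ ξ in (1:ℝ)..y₀, f ξ) + ∫ ξ in y₀..y, f ξ = ∫ ξ in (1:ℝ)..y, f ξ :=
      intervalIntegral.integral_add_adjacent_intervals (hfint 1 y₀ one_pos hy₀pos)
        (hfint y₀ y hy₀pos (lt_of_lt_of_le hy₀pos hy))
    have hmono : (∫ ξ in y₀..y, f ξ) ≤ ∫ ξ in y₀..y, c0 := by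
      apply intervalIntegral.integral_mono_on hy
        (hfint y₀ y hy₀pos (lt_of_lt_of_le hy₀pos hy)) intervalIntegrable_const
      intro x hx
      exact hN' x hx.1
    rw [intervalIntegral.integral_const, smul_eq_mul] at hmono
    have : F y = F y₀ + ∫ ξ in y₀..y, f ξ := by
      simp only [hFdef]; rw [← hadd]
    rw [this]
    linarith [hmono]
  have htail : IntegrableOn g (Ioi y₀) := by
    have hb : 0 < -(β * c0) := by nlinarith
    set K : ℝ := Real.exp (β * (F y₀ - c0 * y₀)) with hKdef
    have hint : IntegrableOn (fun y : ℝ => K * Real.exp (-(-(β * c0)) * y)) (Ioi y₀) :=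
      (exp_neg_integrableOn_Ioi y₀ hb).const_mul K
    have hmeas : AEStronglyMeasurable g (volume.restrict (Ioi y₀)) :=
      (hgcont.mono (fun x hx => lt_trans hy₀pos hx)).aestronglyMeasurable measurableSet_Ioi
    apply hint.mono' hmeas
    filter_upwards [ae_restrict_mem measurableSet_Ioi] with y hy
    have hy' : y₀ ≤ y := le_of_lt hy
    have hypos : 0 < y := lt_of_lt_of_le hy₀pos hy'
    rw [Real.norm_eq_abs, abs_of_pos (hgpos y hypos)]
    rw [hgeq y hypos]
    have h1 : y⁻¹ ≤ 1 := by
      rw [inv_le_one_iff₀]; right; linarith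
    have h2 : Real.exp (β * F y) ≤ K * Real.exp (-(-(β * c0)) * y) := by
      rw [hKdef, ← Real.exp_add]
      apply Real.exp_le_exp.mpr
      have := hFtail y hy'
      nlinarith [mul_le_mul_of_nonneg_left this (le_of_lt hβpos)]
    calc y⁻¹ * Real.exp (β * F y) ≤ 1 * Real.exp (β * F y) := by
          exact mul_le_mul_of_nonneg_right h1 (Real.exp_pos _).le
      _ = Real.exp (β * F y) := one_mul _
      _ ≤ K * Real.exp (-(-(β * c0)) * y) := h2
  have hintOn : IntegrableOn g (Ioi 0) := by
    have h1 := hnear.union hmid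
    rw [Ioc_union_Ioc_eq_Ioc zero_le_one hy₀1] at h1
    have h2 := h1.union htail
    rwa [Ioc_union_Ioi_eq_Ioi (le_of_lt hy₀pos)] at h2
  refine ⟨htend, hintOn, ?_⟩
  -- normalization
  set I : ℝ := ∫ y in Ioi (0:ℝ), g y with hIdef
  have hnonneg : 0 ≤ᵐ[volume.restrict (Ioi (0:ℝ))] g := by
    filter_upwards [ae_restrict_mem measurableSet_Ioi] with y hy using le_of_lt (hgpos y hy)
  have hI : 0 < I := by
    rw [hIdef, setIntegral_pos_iff_support_of_nonneg_ae hnonneg hintOn]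
    have hsub : Ioi (0:ℝ) ⊆ Function.support g ∩ Ioi 0 :=
      fun y hy => ⟨ne_of_gt (hgpos y hy), hy⟩
    calc (0:ENNReal) < volume (Ioi (0:ℝ)) := by simp [Real.volume_Ioi]
      _ ≤ volume (Function.support g ∩ Ioi 0) := measure_mono hsub
  refine ⟨I⁻¹, inv_pos.mpr hI, ?_⟩
  rw [MeasureTheory.integral_const_mul, ← hIdef, inv_mul_cancel₀ (ne_of_gt hI)]
end

section
/- Let v > 0, let α : (0,∞) → ℝ be continuous, and let g ∈ C¹((0,∞)) be strictly positive and satisfy the zero-flux relation (v²/2)·(d/dy)(y·g(y)) = α(y)·g(y) for every y > 0. Let F : [0,∞) → ℝ be continuous with F·g integrable on (0,1), and let ψ ∈ C²((0,∞)) satisfy ψ'(y) = (1/(y·g(y)))·∫₀^y F(ξ)·g(ξ) dξ for every y > 0. Then α(y)·ψ'(y) + (v²y/2)·ψ''(y) = (v²/2)·F(y) for every y > 0. -/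
open Real Set MeasureTheory

/-- Explicit solution of the Poisson-type equation `L₀ψ = (v²/2)·F`: if the strictly
positive `C¹` density `g` satisfies the zero-flux relation
`(v²/2)·(y·g(y))' = α(y)·g(y)` on `(0,∞)`, `F` is continuous on `[0,∞)` with `F·g`
integrable on `(0,1)`, and `ψ ∈ C²((0,∞))` satisfies
`ψ'(y) = (1/(y·g(y)))·∫₀^y F(ξ)·g(ξ) dξ`, then
`α(y)·ψ'(y) + (v²y/2)·ψ''(y) = (v²/2)·F(y)` for every `y > 0`. -/
theorem stmt_9 (v : ℝ) (hv : 0 < v)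
    (α : ℝ → ℝ) (hα : ContinuousOn α (Set.Ioi 0))
    (g : ℝ → ℝ) (hg : ContDiffOn ℝ 1 g (Set.Ioi 0))
    (hgpos : ∀ y : ℝ, 0 < y → 0 < g y)
    (hflux : ∀ y : ℝ, 0 < y →
      v ^ 2 / 2 * deriv (fun z => z * g z) y = α y * g y)
    (F : ℝ → ℝ) (hF : ContinuousOn F (Set.Ici 0))
    (hFg : MeasureTheory.IntegrableOn (fun ξ => F ξ * g ξ) (Set.Ioo 0 1))
    (ψ : ℝ → ℝ) (hψ : ContDiffOn ℝ 2 ψ (Set.Ioi 0))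
    (hψ' : ∀ y : ℝ, 0 < y →
      deriv ψ y = (1 / (y * g y)) * ∫ ξ in Set.Ioc (0:ℝ) y, F ξ * g ξ) :
    ∀ y : ℝ, 0 < y →
      α y * deriv ψ y + v ^ 2 * y / 2 * deriv (deriv ψ) y = v ^ 2 / 2 * F y := by
  intro y hy
  set f : ℝ → ℝ := fun ξ => F ξ * g ξ with hf
  -- continuity of f on Ioi 0
  have hgcont : ContinuousOn g (Set.Ioi 0) := hg.continuousOn
  have hfcont : ContinuousOn f (Set.Ioi 0) := by
    exact (hF.mono Set.Ioi_subset_Ici_self).mul hgcont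
  have hyIoi : Set.Ioi (0:ℝ) ∈ nhds y := (isOpen_Ioi).mem_nhds hy
  -- g differentiable at y
  have hgd : HasDerivAt g (deriv g y) y := by
    have : DifferentiableAt ℝ g y := by
      have := (hg.contDiffAt hyIoi).differentiableAt one_ne_zero
      exact this
    exact this.hasDerivAt
  set g' := deriv g y with hg'
  -- derivative of h z = z * g z
  have hh : HasDerivAt (fun z => z * g z) (g y + y * g') y := by
    have := (hasDerivAt_id' y).mul hgd
    simp only [one_mul] at this
    exact this
  have hgy : g y ≠ 0 := (hgpos y hy).ne'
  have hyne : y ≠ 0 := hy.ne'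
  have hhy : y * g y ≠ 0 := mul_ne_zero hyne hgy
  -- integrability on Ioc 0 y
  have hfint : MeasureTheory.IntegrableOn f (Set.Ioc 0 y) := by
    set m := min y 1 / 2 with hm
    have hm0 : 0 < m := by positivity
    have hmin : 0 < min y 1 := lt_min hy one_pos
    have hmy : m ≤ y := le_trans (half_le_self hmin.le) (min_le_left y 1)
    have hm1 : m < 1 := lt_of_lt_of_le (half_lt_self hmin) (min_le_right y 1)
    have hsub : Set.Ioc 0 y ⊆ Set.Ioo 0 1 ∪ Set.Icc m y := by
      intro ξ hξ
      rcases lt_or_ge ξ 1 with h1 | h1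
      · exact Or.inl ⟨hξ.1, h1⟩
      · exact Or.inr ⟨le_trans hm1.le h1, hξ.2⟩
    have hint2 : MeasureTheory.IntegrableOn f (Set.Icc m y) := by
      apply (hfcont.mono ?_).integrableOn_compact isCompact_Icc
      intro ξ hξ; exact lt_of_lt_of_le hm0 hξ.1
    exact (hFg.union hint2).mono_set hsub
  have hiint : IntervalIntegrable f MeasureTheory.volume 0 y :=
    (intervalIntegrable_iff_integrableOn_Ioc_of_le hy.le).mpr hfint
  -- FTC
  have hfca : ContinuousAt f y := hfcont.continuousAt hyIoi
  have hsm : StronglyMeasurableAtFilter f (nhds y) :=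
    hfcont.stronglyMeasurableAtFilter isOpen_Ioi y hy
  have hIder : HasDerivAt (fun t => ∫ ξ in (0:ℝ)..t, f ξ) (f y) y :=
    intervalIntegral.integral_hasDerivAt_right hiint hsm hfca
  set I : ℝ → ℝ := fun t => ∫ ξ in Set.Ioc (0:ℝ) t, f ξ with hIdef
  have heq : (fun t => ∫ ξ in (0:ℝ)..t, f ξ) =ᶠ[nhds y] I := by
    filter_upwards [hyIoi] with t ht
    simp [hIdef, intervalIntegral.integral_of_le (le_of_lt ht)]
  have hI : HasDerivAt I (f y) y := hIder.congr_of_eventuallyEq heq.symm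
  -- deriv ψ agrees with I t / (t * g t) near y
  have hpsi_eq : deriv ψ =ᶠ[nhds y] (fun t => (1 / (t * g t)) * I t) := by
    filter_upwards [hyIoi] with t ht
    exact hψ' t ht
  -- derivative of RHS
  have hinv : HasDerivAt (fun t => 1 / (t * g t)) (-(g y + y * g') / (y * g y) ^ 2) y := by
    have := hh.inv hhy
    simp only [one_div]
    exact this
  have hrhs : HasDerivAt (fun t => (1 / (t * g t)) * I t)
      (-(g y + y * g') / (y * g y) ^ 2 * I y + 1 / (y * g y) * f y) y := hinv.mul hI
  have hd2 : deriv (deriv ψ) y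
      = -(g y + y * g') / (y * g y) ^ 2 * I y + 1 / (y * g y) * f y := by
    rw [Filter.EventuallyEq.deriv_eq hpsi_eq]
    exact hrhs.deriv
  have hflux' : v ^ 2 / 2 * (g y + y * g') = α y * g y := by
    rw [← hflux y hy, hh.deriv]
  rw [hψ' y hy, hd2]
  have hIy : (∫ ξ in Set.Ioc (0:ℝ) y, F ξ * g ξ) = I y := rfl
  rw [hIy]
  have hα' : α y = v ^ 2 / 2 * (g y + y * g') / g y := by
    field_simp
    linarith [hflux']
  rw [hα']
  show _ + _ * (_ + 1 / (y * g y) * (F y * g y)) = _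
  field_simp
  ring
end

section
/- Let v > 0 and let α : [0,∞) → ℝ be continuously differentiable with 2α(0)/v² > 1. Suppose ψ ∈ C²((0,∞)) ∩ C([0,∞)) satisfies α(y)·ψ'(y) + (v²y/2)·ψ''(y) = 0 for every y > 0. Then ψ is constant on [0,∞). -/
open Real Set MeasureTheory intervalIntegral

/-- Homogeneous Poisson-equation lemma: if `α ∈ C¹([0,∞))` with `2α(0)/v² > 1`
and `ψ ∈ C²((0,∞)) ∩ C([0,∞))` satisfies `L₀ψ(y) = α(y)·ψ'(y) + (v²y/2)·ψ''(y) = 0`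
for all `y > 0`, then `ψ` is constant on `[0,∞)`. -/
theorem stmt_10 (v : ℝ) (hv : 0 < v)
    (α : ℝ → ℝ) (hα : ContDiffOn ℝ 1 α (Set.Ici 0))
    (hα0 : 2 * α 0 / v ^ 2 > 1)
    (ψ : ℝ → ℝ) (hψ : ContDiffOn ℝ 2 ψ (Set.Ioi 0))
    (hψc : ContinuousOn ψ (Set.Ici 0))
    (heq : ∀ y : ℝ, 0 < y →
      α y * deriv ψ y + v ^ 2 * y / 2 * deriv (deriv ψ) y = 0) :
    ∀ y : ℝ, 0 ≤ y → ψ y = ψ 0 := by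
  have hv2 : (0:ℝ) < v ^ 2 := by positivity
  have hαcont : ContinuousOn α (Ici 0) := hα.continuousOn
  -- choose δ with α t ≥ v²/2 on [0, δ]
  have h0 : v ^ 2 / 2 < α 0 := by
    rw [gt_iff_lt, lt_div_iff₀ hv2] at hα0
    linarith
  obtain ⟨δ, hδpos, hδ⟩ : ∃ δ > 0, ∀ t ∈ Icc (0:ℝ) δ, v ^ 2 / 2 ≤ α t := by
    have hev : α ⁻¹' {x | v ^ 2 / 2 < x} ∈ nhdsWithin 0 (Ici 0) :=
      (hαcont 0 self_mem_Ici) (lt_mem_nhds h0)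
    obtain ⟨u, huo, hu0, husub⟩ := mem_nhdsWithin.mp hev
    obtain ⟨r, hrpos, hrsub⟩ := Metric.isOpen_iff.mp huo 0 hu0
    refine ⟨r / 2, by positivity, fun t ht => ?_⟩
    have htu : t ∈ u := by
      apply hrsub
      rw [Metric.mem_ball, Real.dist_eq, sub_zero, abs_of_nonneg ht.1]
      linarith [ht.2]
    exact le_of_lt (husub ⟨htu, ht.1⟩)
  set f : ℝ → ℝ := fun t => 2 * α t / (v ^ 2 * t) with hfdef
  have hfc : ContinuousOn f (Ioi 0) := by
    apply ContinuousOn.div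
    · exact continuousOn_const.mul (hαcont.mono Ioi_subset_Ici_self)
    · exact continuousOn_const.mul continuousOn_id
    · intro t ht
      exact ne_of_gt (mul_pos hv2 ht)
  have hfint : ∀ a b : ℝ, 0 < a → 0 < b → IntervalIntegrable f volume a b := by
    intro a b ha hb
    apply (hfc.mono ?_).intervalIntegrable
    intro t ht
    exact lt_of_lt_of_le (lt_min ha hb) ht.1
  set G : ℝ → ℝ := fun y => ∫ t in δ..y, f t with hGdef
  have hGderiv : ∀ y, 0 < y → HasDerivAt G (f y) y := by
    intro y hy
    exact intervalIntegral.integral_hasDerivAt_right (hfint δ y hδpos hy)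
      (hfc.stronglyMeasurableAtFilter isOpen_Ioi y hy)
      (hfc.continuousAt (isOpen_Ioi.mem_nhds hy))
  have hGcont : ContinuousOn G (Ioi 0) := fun y hy =>
    (hGderiv y hy).continuousAt.continuousWithinAt
  -- derivatives of ψ
  have hψ1 : ∀ y, 0 < y → HasDerivAt ψ (deriv ψ y) y := by
    intro y hy
    exact ((hψ.differentiableOn (by norm_num)).differentiableAt
      (isOpen_Ioi.mem_nhds hy)).hasDerivAt
  have hψ'cd : ContDiffOn ℝ 1 (deriv ψ) (Ioi 0) :=
    hψ.deriv_of_isOpen (m := 1) isOpen_Ioi (by norm_num)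
  have hψ2 : ∀ y, 0 < y → HasDerivAt (deriv ψ) (deriv (deriv ψ) y) y := by
    intro y hy
    exact ((hψ'cd.differentiableOn (by norm_num)).differentiableAt
      (isOpen_Ioi.mem_nhds hy)).hasDerivAt
  have hψ'cont : ContinuousOn (deriv ψ) (Ioi 0) := hψ'cd.continuousOn
  -- integrating factor
  set h : ℝ → ℝ := fun y => deriv ψ y * exp (G y) with hhdef
  have hhderiv : ∀ y, 0 < y → HasDerivAt h 0 y := by
    intro y hy
    have H := (hψ2 y hy).mul ((hGderiv y hy).exp)
    have hy' : y ≠ 0 := ne_of_gt hy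
    have he := heq y hy
    have hψ'' : deriv (deriv ψ) y = -(f y) * deriv ψ y := by
      rw [hfdef]
      field_simp
      linarith
    refine H.congr_deriv ?_
    rw [hψ'']
    ring
  have hconsth : ∀ y, 0 < y → h y = h δ := by
    intro y hy
    have hsub : uIcc δ y ⊆ Ioi 0 := fun t ht => lt_of_lt_of_le (lt_min hδpos hy) ht.1
    have := intervalIntegral.integral_eq_sub_of_hasDerivAt
      (f := h) (f' := fun _ => (0:ℝ)) (fun t ht => hhderiv t (hsub ht))
      intervalIntegrable_const
    simp only [intervalIntegral.integral_const, smul_zero] at this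
    linarith [this]
  set c := h δ with hcdef
  have hψ'eq : ∀ y, 0 < y → deriv ψ y = c * exp (-G y) := by
    intro y hy
    have h1 : deriv ψ y = c / exp (G y) := by
      rw [eq_div_iff (exp_ne_zero _)]
      exact hconsth y hy
    rw [h1, exp_neg, div_eq_mul_inv]
  -- FTC
  have hFTC : ∀ a b : ℝ, 0 < a → 0 < b →
      ψ b - ψ a = ∫ t in a..b, c * exp (-G t) := by
    intro a b ha hb
    have hsub : uIcc a b ⊆ Ioi 0 := fun t ht => lt_of_lt_of_le (lt_min ha hb) ht.1
    rw [← intervalIntegral.integral_eq_sub_of_hasDerivAt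
      (f' := deriv ψ) (fun t ht => hψ1 t (hsub ht))
      ((hψ'cont.mono hsub).intervalIntegrable)]
    apply intervalIntegral.integral_congr
    intro t ht
    exact hψ'eq t (hsub ht)
  -- bound on ψ near 0
  obtain ⟨M, hM⟩ : ∃ M, ∀ t ∈ Icc (0:ℝ) δ, |ψ t| ≤ M := by
    obtain ⟨M, hM⟩ := isCompact_Icc.exists_bound_of_continuousOn
      (hψc.mono (Icc_subset_Ici_self))
    exact ⟨M, fun t ht => hM t ht⟩
  have hMnn : 0 ≤ M := le_trans (abs_nonneg _) (hM 0 ⟨le_refl 0, le_of_lt hδpos⟩)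
  -- c must be zero
  have hc0 : c = 0 := by
    by_contra hcne
    have hcpos : 0 < |c| := abs_pos.mpr hcne
    set K := (2 * M + 1) / (|c| * δ) with hKdef
    have hKpos : 0 < K := by positivity
    set ε := δ * exp (-K) with hεdef
    have hεpos : 0 < ε := by positivity
    have hεδ : ε < δ := by
      have he1 : exp (-K) < 1 := exp_lt_one_iff.mpr (neg_lt_zero.mpr hKpos)
      calc ε = δ * exp (-K) := rfl
        _ < δ * 1 := by nlinarith
        _ = δ := mul_one δ
    have hGle : ∀ t ∈ Icc ε δ, δ / t ≤ exp (-G t) := by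
      intro t ht
      have htpos : 0 < t := lt_of_lt_of_le hεpos ht.1
      have h1 : G t = -(∫ s in t..δ, f s) := by
        rw [hGdef]
        exact intervalIntegral.integral_symm t δ
      have h2 : (∫ s in t..δ, 1 / s) ≤ ∫ s in t..δ, f s := by
        apply intervalIntegral.integral_mono_on ht.2 ?_ (hfint t δ htpos hδpos)
        · intro s hs
          have hspos : 0 < s := lt_of_lt_of_le htpos hs.1
          have hαs : v ^ 2 / 2 ≤ α s := hδ s ⟨le_of_lt hspos, hs.2⟩
          rw [hfdef]
          rw [div_le_div_iff₀ hspos (mul_pos hv2 hspos)]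
          nlinarith
        · apply ContinuousOn.intervalIntegrable
          apply ContinuousOn.div continuousOn_const continuousOn_id
          intro s hs
          have : 0 < s := lt_of_lt_of_le (lt_min htpos hδpos) hs.1
          exact ne_of_gt this
      have h3 : (∫ s in t..δ, 1 / s) = log (δ / t) := by
        apply integral_one_div
        intro hmem
        have : 0 < (0:ℝ) := lt_of_lt_of_le (lt_min htpos hδpos) hmem.1
        exact lt_irrefl 0 this
      have h4 : G t ≤ -log (δ / t) := by
        rw [h1]
        rw [h3] at h2
        linarith
      have h5 : log (δ / t) ≤ -G t := by linarith
      calc δ / t = exp (log (δ / t)) := (exp_log (by positivity)).symm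
        _ ≤ exp (-G t) := exp_le_exp.mpr h5
    have hexpcont : ContinuousOn (fun t => exp (-G t)) (Ioi 0) :=
      continuous_exp.comp_continuousOn hGcont.neg
    have hsubεδ : uIcc ε δ ⊆ Ioi 0 := fun t ht =>
      lt_of_lt_of_le (lt_min hεpos hδpos) ht.1
    have hint1 : ∫ t in ε..δ, δ * (1 / t) ≤ ∫ t in ε..δ, exp (-G t) := by
      apply intervalIntegral.integral_mono_on (le_of_lt hεδ)
      · apply ContinuousOn.intervalIntegrable
        apply ContinuousOn.mul continuousOn_const
        apply ContinuousOn.div continuousOn_const continuousOn_id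
        intro s hs
        exact ne_of_gt (hsubεδ hs)
      · exact (hexpcont.mono hsubεδ).intervalIntegrable
      · intro t ht
        have := hGle t ht
        rw [mul_one_div]
        have htpos : 0 < t := lt_of_lt_of_le hεpos ht.1
        exact this
    have hint2 : ∫ t in ε..δ, δ * (1 / t) = δ * log (δ / ε) := by
      rw [intervalIntegral.integral_const_mul]
      congr 1
      apply integral_one_div
      intro hmem
      have : 0 < (0:ℝ) := lt_of_lt_of_le (lt_min hεpos hδpos) hmem.1
      exact lt_irrefl 0 this
    have hlogε : log (δ / ε) = K := by
      rw [hεdef]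
      rw [show δ / (δ * exp (-K)) = (exp (-K))⁻¹ by
        field_simp]
      rw [← exp_neg, neg_neg, log_exp]
    have hIlow : δ * K ≤ ∫ t in ε..δ, exp (-G t) := by
      rw [← hlogε]
      linarith [hint1, hint2]
    have hψint : ψ δ - ψ ε = c * ∫ t in ε..δ, exp (-G t) := by
      rw [hFTC ε δ hεpos hδpos, intervalIntegral.integral_const_mul]
    have hlb : 2 * M + 1 ≤ |ψ δ - ψ ε| := by
      rw [hψint, abs_mul]
      have hInn : 0 ≤ ∫ t in ε..δ, exp (-G t) :=
        le_trans (by positivity) hIlow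
      rw [abs_of_nonneg hInn]
      have hKval : |c| * (δ * K) = 2 * M + 1 := by
        rw [hKdef]
        field_simp
      calc 2 * M + 1 = |c| * (δ * K) := hKval.symm
        _ ≤ |c| * ∫ t in ε..δ, exp (-G t) :=
            mul_le_mul_of_nonneg_left hIlow (abs_nonneg c)
    have hub : |ψ δ - ψ ε| ≤ 2 * M := by
      have h1 := hM δ ⟨le_of_lt hδpos, le_refl δ⟩
      have h2 := hM ε ⟨le_of_lt hεpos, le_of_lt hεδ⟩
      have h3 : |ψ δ - ψ ε| ≤ |ψ δ| + |ψ ε| := by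
        calc |ψ δ - ψ ε| = |ψ δ + -ψ ε| := by rw [sub_eq_add_neg]
          _ ≤ |ψ δ| + |-ψ ε| := abs_add_le _ _
          _ = |ψ δ| + |ψ ε| := by rw [abs_neg]
      linarith
    linarith
  -- conclude
  have hconst : ∀ y, 0 < y → ψ y = ψ δ := by
    intro y hy
    have := hFTC δ y hδpos hy
    rw [hc0] at this
    simp only [zero_mul, intervalIntegral.integral_zero] at this
    linarith
  have h0δ : ψ 0 = ψ δ := by
    have h1 : Filter.Tendsto ψ (nhdsWithin 0 (Ioi 0)) (nhds (ψ 0)) :=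
      (hψc 0 self_mem_Ici).mono_left (nhdsWithin_mono 0 Ioi_subset_Ici_self)
    have h2 : Filter.Tendsto ψ (nhdsWithin 0 (Ioi 0)) (nhds (ψ δ)) := by
      apply Filter.Tendsto.congr' _ tendsto_const_nhds
      filter_upwards [self_mem_nhdsWithin] with t ht
      exact (hconst t ht).symm
    exact tendsto_nhds_unique h1 h2
  intro y hy
  rcases eq_or_lt_of_le hy with hcase | hcase
  · rw [← hcase]
  · rw [hconst y hcase, h0δ]
end

section
/- Let g : (0,∞) → [0,∞) be a measurable probability density with finite third moment, and set σ² = ∫₀^∞ y·g(y) dy, D = ∫₀^∞ (y − σ²)²·g(y) dy, and T₃ = ∫₀^∞ (y − σ²)³·g(y) dy. Set G(y) = ∫₀^y (ξ − σ²)·g(ξ) dξ, and assume that y ↦ y·G(y) is Lebesgue integrable on (0,∞) and that y²·G(y) → 0 as y → ∞. Then ∫₀^∞ y·G(y) dy = −(1/2)·T₃ − σ²·D. Equivalently, writing S = T₃/D^{3/2} for the skewness (when D > 0), ∫₀^∞ y·G(y) dy = −(1/2)·S·D^{3/2} − σ²·D. -/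
open Real Set Filter Topology MeasureTheory

/-- For a probability density `g` on `(0,∞)` with finite third moment, mean `σ²`,
variance `D` and third central moment `T₃ = ∫₀^∞ (y − σ²)³·g(y) dy`, setting
`G(y) = ∫₀^y (ξ − σ²)·g(ξ) dξ`, if `y·G(y)` is integrable on `(0,∞)` and
`y²·G(y) → 0` as `y → ∞`, then `∫₀^∞ y·G(y) dy = −(1/2)·T₃ − σ²·D`; equivalently,
when `D > 0`, with skewness `S = T₃/D^{3/2}` one has
`∫₀^∞ y·G(y) dy = −(1/2)·S·D^{3/2} − σ²·D`. -/
theorem stmt_13 (g : ℝ → ℝ) (hgm : Measurable g)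
    (hg0 : ∀ y : ℝ, 0 < y → 0 ≤ g y)
    (hg1 : ∫ y in Set.Ioi (0:ℝ), g y = 1)
    (hmom3 : MeasureTheory.IntegrableOn (fun y => y ^ 3 * g y) (Set.Ioi 0))
    (σ2 D T₃ : ℝ)
    (hσ2 : σ2 = ∫ y in Set.Ioi (0:ℝ), y * g y)
    (hD : D = ∫ y in Set.Ioi (0:ℝ), (y - σ2) ^ 2 * g y)
    (hT₃ : T₃ = ∫ y in Set.Ioi (0:ℝ), (y - σ2) ^ 3 * g y)
    (G : ℝ → ℝ)
    (hG : ∀ y : ℝ, G y = ∫ ξ in Set.Ioc (0:ℝ) y, (ξ - σ2) * g ξ)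
    (hGint : MeasureTheory.IntegrableOn (fun y => y * G y) (Set.Ioi 0))
    (hGlim : Tendsto (fun y => y ^ 2 * G y) atTop (𝓝 0)) :
    (∫ y in Set.Ioi (0:ℝ), y * G y = -(1/2) * T₃ - σ2 * D) ∧
    (0 < D →
      ∫ y in Set.Ioi (0:ℝ), y * G y
        = -(1/2) * (T₃ / D ^ ((3:ℝ)/2)) * D ^ ((3:ℝ)/2) - σ2 * D) := by
  -- integrability of the lower moments
  have hq0 : MeasureTheory.IntegrableOn g (Set.Ioi 0) := by
    by_contra h
    rw [MeasureTheory.integral_undef h] at hg1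
    norm_num at hg1
  have key : ∀ n : ℕ, n ≤ 3 →
      MeasureTheory.IntegrableOn (fun y => y ^ n * g y) (Set.Ioi 0) := by
    intro n hn
    apply MeasureTheory.Integrable.mono' (hq0.add hmom3)
    · exact ((measurable_id.pow_const n).mul hgm).aestronglyMeasurable
    · rw [MeasureTheory.ae_restrict_iff' measurableSet_Ioi]
      filter_upwards with y hy
      have hgy := hg0 y hy
      simp only [Pi.add_apply, Real.norm_eq_abs,
        abs_of_nonneg (mul_nonneg (pow_nonneg hy.le n) hgy)]
      rcases le_total y 1 with h1 | h1
      · have h2 : y ^ n * g y ≤ 1 * g y :=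
          mul_le_mul_of_nonneg_right (pow_le_one₀ hy.le h1) hgy
        nlinarith [mul_nonneg (pow_nonneg hy.le 3) hgy]
      · have h2 : y ^ n * g y ≤ y ^ 3 * g y :=
          mul_le_mul_of_nonneg_right (pow_le_pow_right₀ h1 hn) hgy
        nlinarith [hgy]
  have hq1 : MeasureTheory.IntegrableOn (fun y => y * g y) (Set.Ioi 0) := by
    have := key 1 (by norm_num); simpa using this
  have hq2 : MeasureTheory.IntegrableOn (fun y => y ^ 2 * g y) (Set.Ioi 0) :=
    key 2 (by norm_num)
  -- the signed integrand and its properties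
  set φ : ℝ → ℝ := fun ξ => (ξ - σ2) * g ξ with hφdef
  have hφint : MeasureTheory.IntegrableOn φ (Set.Ioi 0) := by
    have hre : φ = fun ξ => ξ * g ξ - σ2 * g ξ := by funext ξ; simp [hφdef]; ring
    rw [hre]
    exact hq1.sub (hq0.const_mul σ2)
  have hφ0 : ∫ ξ in Set.Ioi (0:ℝ), φ ξ = 0 := by
    have hre : φ = fun ξ => ξ * g ξ - σ2 * g ξ := by funext ξ; simp [hφdef]; ring
    rw [hre, MeasureTheory.integral_sub hq1 (hq0.const_mul σ2),
      MeasureTheory.integral_const_mul, hg1, ← hσ2]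
    ring
  set ψ : ℝ → ℝ := (Set.Ioi (0:ℝ)).indicator φ with hψdef
  have hφm : Measurable φ := (measurable_id.sub_const σ2).mul hgm
  have hψm : Measurable ψ := hφm.indicator measurableSet_Ioi
  have hψint : MeasureTheory.Integrable ψ :=
    (MeasureTheory.integrable_indicator_iff measurableSet_Ioi).2 hφint
  -- tail formula for G
  have hGtail : ∀ y : ℝ, 0 < y → G y = - ∫ ξ in Set.Ioi y, ψ ξ := by
    intro y hy
    have hun : Set.Ioc (0:ℝ) y ∪ Set.Ioi y = Set.Ioi 0 := Set.Ioc_union_Ioi_eq_Ioi hy.le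
    have hdisj : Disjoint (Set.Ioc (0:ℝ) y) (Set.Ioi y) := Set.Ioc_disjoint_Ioi_same
    have hsum : ∫ ξ in Set.Ioi (0:ℝ), φ ξ
        = (∫ ξ in Set.Ioc (0:ℝ) y, φ ξ) + ∫ ξ in Set.Ioi y, φ ξ := by
      rw [← hun]
      exact MeasureTheory.setIntegral_union hdisj measurableSet_Ioi
        (hφint.mono_set (by rw [← hun]; exact Set.subset_union_left))
        (hφint.mono_set (by rw [← hun]; exact Set.subset_union_right))
    have hψres : ∫ ξ in Set.Ioi y, ψ ξ = ∫ ξ in Set.Ioi y, φ ξ := by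
      rw [hψdef, MeasureTheory.setIntegral_indicator measurableSet_Ioi]
      congr 1
      rw [Set.Ioi_inter_Ioi, max_eq_left hy.le]
    rw [hψres, hG y]
    rw [hφ0] at hsum
    linarith [hsum]
  -- the Fubini kernel
  set F : ℝ → ℝ → ℝ := fun ξ y => (Set.Ioo (0:ℝ) ξ).indicator (fun t => t) y * ψ ξ with hFdef
  have hFm : Measurable (Function.uncurry F) := by
    have hre : Function.uncurry F
        = Set.indicator {p : ℝ × ℝ | 0 < p.2 ∧ p.2 < p.1} (fun p => p.2 * ψ p.1) := by
      funext p
      simp only [Function.uncurry, hFdef, Set.indicator, Set.mem_Ioo, Set.mem_setOf_eq]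
      split_ifs <;> simp_all
    rw [hre]
    exact (measurable_snd.mul (hψm.comp measurable_fst)).indicator
      ((measurableSet_lt measurable_const measurable_snd).inter
        (measurableSet_lt measurable_snd measurable_fst))
  -- value of the inner integral ∫ y in Ioo 0 ξ, y
  have hIoo : ∀ ξ : ℝ, (∫ y in Set.Ioo (0:ℝ) ξ, y) = if 0 < ξ then ξ ^ 2 / 2 else 0 := by
    intro ξ
    split_ifs with h
    · rw [← MeasureTheory.integral_Ioc_eq_integral_Ioo,
        ← intervalIntegral.integral_of_le h.le, integral_id]
      ring
    · rw [Set.Ioo_eq_empty h]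
      exact MeasureTheory.setIntegral_empty
  -- inner integrals of F
  have hFinner : ∀ ξ : ℝ, (∫ y, F ξ y) = (if 0 < ξ then ξ ^ 2 / 2 else 0) * ψ ξ := by
    intro ξ
    rw [hFdef]
    rw [MeasureTheory.integral_mul_const, MeasureTheory.integral_indicator measurableSet_Ioo,
      hIoo ξ]
  have hFnorm : ∀ ξ : ℝ, (∫ y, ‖F ξ y‖) = (if 0 < ξ then ξ ^ 2 / 2 else 0) * |ψ ξ| := by
    intro ξ
    have hre : (fun y => ‖F ξ y‖)
        = fun y => (Set.Ioo (0:ℝ) ξ).indicator (fun t => t) y * |ψ ξ| := by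
      funext y
      simp only [hFdef, Real.norm_eq_abs, abs_mul]
      congr 1
      by_cases h : y ∈ Set.Ioo (0:ℝ) ξ
      · rw [Set.indicator_of_mem h]; exact abs_of_nonneg h.1.le
      · rw [Set.indicator_of_notMem h]; exact abs_zero
    rw [hre, MeasureTheory.integral_mul_const,
      MeasureTheory.integral_indicator measurableSet_Ioo, hIoo ξ]
  -- integrability of uncurry F
  have hFint : MeasureTheory.Integrable (Function.uncurry F)
      ((volume : Measure ℝ).prod volume) := by
    rw [MeasureTheory.integrable_prod_iff hFm.aestronglyMeasurable]
    constructor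
    · filter_upwards with ξ
      simp only [Function.uncurry_apply_pair]
      have hre : F ξ = (Set.Ioo (0:ℝ) ξ).indicator (fun y => y * ψ ξ) := by
        funext y
        simp only [hFdef]
        by_cases h : y ∈ Set.Ioo (0:ℝ) ξ
        · rw [Set.indicator_of_mem h, Set.indicator_of_mem h]
        · rw [Set.indicator_of_notMem h, Set.indicator_of_notMem h, zero_mul]
      rw [hre]
      rw [MeasureTheory.integrable_indicator_iff measurableSet_Ioo]
      exact ((continuous_id.mul continuous_const).integrableOn_Icc).mono_set
        Set.Ioo_subset_Icc_self
    · simp only [Function.uncurry_apply_pair]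
      have hre : (fun ξ => ∫ y, ‖F ξ y‖)
          = fun ξ => (if 0 < ξ then ξ ^ 2 / 2 else 0) * |ψ ξ| := funext hFnorm
      rw [hre]
      have hMint : MeasureTheory.Integrable
          ((Set.Ioi (0:ℝ)).indicator
            (fun ξ => 1/2 * (ξ ^ 3 * g ξ) + |σ2| / 2 * (ξ ^ 2 * g ξ))) :=
        (MeasureTheory.integrable_indicator_iff measurableSet_Ioi).2
          ((hmom3.const_mul (1/2)).add (hq2.const_mul (|σ2|/2)))
      apply MeasureTheory.Integrable.mono' hMint
      · apply Measurable.aestronglyMeasurable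
        apply Measurable.mul _ hψm.abs
        exact Measurable.ite measurableSet_Ioi
          ((measurable_id.pow_const 2).div_const 2) measurable_const
      · filter_upwards with ξ
        by_cases h : 0 < ξ
        · have hgξ := hg0 ξ h
          rw [if_pos h, Set.indicator_of_mem (Set.mem_Ioi.2 h), hψdef,
            Set.indicator_of_mem (Set.mem_Ioi.2 h),
            Real.norm_eq_abs, abs_of_nonneg
              (mul_nonneg (by positivity) (abs_nonneg _)), hφdef]
          have habs : |(ξ - σ2) * g ξ| ≤ (ξ + |σ2|) * g ξ := by
            rw [abs_mul, abs_of_nonneg hgξ]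
            apply mul_le_mul_of_nonneg_right _ hgξ
            calc |ξ - σ2| ≤ |ξ| + |σ2| := abs_sub _ _
              _ = ξ + |σ2| := by rw [abs_of_pos h]
          nlinarith [sq_nonneg ξ, h.le]
        · rw [if_neg h, Set.indicator_of_notMem (by simpa using h), zero_mul, norm_zero]
  -- Fubini swap
  have hswap : (∫ ξ, ∫ y, F ξ y) = ∫ y, ∫ ξ, F ξ y :=
    MeasureTheory.integral_integral_swap hFint
  -- compute the left side
  have hLHS : (∫ ξ, ∫ y, F ξ y) = ∫ ξ in Set.Ioi (0:ℝ), ξ ^ 2 / 2 * φ ξ := by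
    have hre : (fun ξ => ∫ y, F ξ y)
        = (Set.Ioi (0:ℝ)).indicator (fun ξ => ξ ^ 2 / 2 * φ ξ) := by
      funext ξ
      rw [hFinner ξ]
      by_cases h : 0 < ξ
      · rw [if_pos h, Set.indicator_of_mem (Set.mem_Ioi.2 h), hψdef,
          Set.indicator_of_mem (Set.mem_Ioi.2 h)]
      · rw [if_neg h, Set.indicator_of_notMem (by simpa using h), zero_mul]
    rw [hre, MeasureTheory.integral_indicator measurableSet_Ioi]
  -- compute the right side
  have hRHS : (∫ y, ∫ ξ, F ξ y) = - ∫ y in Set.Ioi (0:ℝ), y * G y := by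
    have hre : (fun y => ∫ ξ, F ξ y)
        = (Set.Ioi (0:ℝ)).indicator (fun y => -(y * G y)) := by
      funext y
      by_cases h : 0 < y
      · rw [Set.indicator_of_mem (Set.mem_Ioi.2 h)]
        have hre2 : (fun ξ => F ξ y) = fun ξ => y * (Set.Ioi y).indicator ψ ξ := by
          funext ξ
          simp only [hFdef]
          by_cases hm : y ∈ Set.Ioo (0:ℝ) ξ
          · rw [Set.indicator_of_mem hm, Set.indicator_of_mem (Set.mem_Ioi.2 hm.2)]
          · rw [Set.indicator_of_notMem hm, zero_mul, Set.indicator_of_notMem, mul_zero]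
            intro hξ
            exact hm ⟨h, hξ⟩
        rw [hre2, MeasureTheory.integral_const_mul,
          MeasureTheory.integral_indicator measurableSet_Ioi, hGtail y h]
        ring
      · rw [Set.indicator_of_notMem (by simpa using h)]
        have hre2 : (fun ξ => F ξ y) = fun _ => (0:ℝ) := by
          funext ξ
          simp only [hFdef]
          rw [Set.indicator_of_notMem (fun hm => h hm.1), zero_mul]
        rw [hre2, MeasureTheory.integral_zero]
    rw [hre, MeasureTheory.integral_indicator measurableSet_Ioi,
      MeasureTheory.integral_neg]
  -- central moment integrabilities
  have hc1int : MeasureTheory.IntegrableOn (fun ξ => (ξ - σ2) * g ξ) (Set.Ioi 0) := hφint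
  have hc2int : MeasureTheory.IntegrableOn (fun ξ => (ξ - σ2) ^ 2 * g ξ) (Set.Ioi 0) := by
    have hre : (fun ξ => (ξ - σ2) ^ 2 * g ξ)
        = fun ξ => (ξ ^ 2 * g ξ - (2 * σ2) * (ξ * g ξ)) + σ2 ^ 2 * g ξ := by
      funext ξ; ring
    rw [hre]
    exact (hq2.sub (hq1.const_mul _)).add (hq0.const_mul _)
  have hc3int : MeasureTheory.IntegrableOn (fun ξ => (ξ - σ2) ^ 3 * g ξ) (Set.Ioi 0) := by
    have hre : (fun ξ => (ξ - σ2) ^ 3 * g ξ)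
        = fun ξ => (ξ ^ 3 * g ξ - (3 * σ2) * (ξ ^ 2 * g ξ))
            + ((3 * σ2 ^ 2) * (ξ * g ξ) - σ2 ^ 3 * g ξ) := by
      funext ξ; ring
    rw [hre]
    exact (hmom3.sub (hq2.const_mul _)).add ((hq1.const_mul _).sub (hq0.const_mul _))
  -- moment algebra
  have hmoment : ∫ ξ in Set.Ioi (0:ℝ), ξ ^ 2 / 2 * φ ξ = 1/2 * T₃ + σ2 * D := by
    have hre : (fun ξ => ξ ^ 2 / 2 * φ ξ)
        = fun ξ => (1/2 * ((ξ - σ2) ^ 3 * g ξ) + σ2 * ((ξ - σ2) ^ 2 * g ξ))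
            + σ2 ^ 2 / 2 * ((ξ - σ2) * g ξ) := by
      funext ξ; simp only [hφdef]; ring
    have i3 : MeasureTheory.IntegrableOn
        (fun ξ => 1/2 * ((ξ - σ2) ^ 3 * g ξ)) (Set.Ioi 0) := hc3int.const_mul _
    have i2 : MeasureTheory.IntegrableOn
        (fun ξ => σ2 * ((ξ - σ2) ^ 2 * g ξ)) (Set.Ioi 0) := hc2int.const_mul _
    have i1 : MeasureTheory.IntegrableOn
        (fun ξ => σ2 ^ 2 / 2 * ((ξ - σ2) * g ξ)) (Set.Ioi 0) := hc1int.const_mul _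
    have i23 : MeasureTheory.IntegrableOn
        (fun ξ => 1/2 * ((ξ - σ2) ^ 3 * g ξ) + σ2 * ((ξ - σ2) ^ 2 * g ξ))
        (Set.Ioi 0) := i3.add i2
    rw [hre, MeasureTheory.integral_add i23 i1,
      MeasureTheory.integral_add i3 i2,
      MeasureTheory.integral_const_mul, MeasureTheory.integral_const_mul,
      MeasureTheory.integral_const_mul, ← hT₃, ← hD, hφ0]
    ring
  -- conclusion
  have hmain : ∫ y in Set.Ioi (0:ℝ), y * G y = -(1/2) * T₃ - σ2 * D := by
    have := hswap
    rw [hLHS, hRHS, hmoment] at this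
    linarith
  refine ⟨hmain, fun hDpos => ?_⟩
  have hpow : D ^ ((3:ℝ)/2) ≠ 0 := (Real.rpow_pos_of_pos hDpos _).ne'
  rw [hmain]
  field_simp
end

section
/- Let σ > 0, κ, θ > 0, λ₁ ∈ ℝ, K₁ ∈ ℝ, T ∈ ℝ, let f : (−∞, T] → ℝ be a function, and let B, A₁₀, A₁₁ : (−∞, T] → ℝ be differentiable functions satisfying B'(t) = (κ + λ₁σ²)·B(t) + (σ²/2)·B(t)² − 1, A₁₁'(t) = (κθ·B(t) + κ + λ₁σ² + σ²·B(t))·A₁₁(t) + K₁·f(t), and A₁₀'(t) = κθ·B(t)·A₁₀(t) − κθ·A₁₁(t) for every t ≤ T. Define P₁(t,r) = (A₁₀(t) + A₁₁(t)·r)·e^{−B(t)·r}. Then for every t ≤ T and every r ∈ ℝ: ∂P₁/∂t (t,r) + (κ(θ − r) − λ₁·σ²·r)·∂P₁/∂r (t,r) + (σ²·r/2)·∂²P₁/∂r² (t,r) − r·P₁(t,r) = K₁·f(t)·r·e^{−B(t)·r}. -/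
open Real

/-- Closed-form first-order correction: if `B, A₁₀, A₁₁` are differentiable on `(−∞, T]`
with `B' = (κ + λ₁σ²)B + (σ²/2)B² − 1`,
`A₁₁' = (κθB + κ + λ₁σ² + σ²B)A₁₁ + K₁f` and `A₁₀' = κθB·A₁₀ − κθ·A₁₁`, then
`P₁(t,r) = (A₁₀(t) + A₁₁(t)r)·e^{−B(t)r}` satisfies
`∂P₁/∂t + (κ(θ−r) − λ₁σ²r)·∂P₁/∂r + (σ²r/2)·∂²P₁/∂r² − r·P₁ = K₁·f(t)·r·e^{−B(t)r}`
for every `t ≤ T` and `r ∈ ℝ`.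
(Here `lam₁` stands for the market price of risk parameter `λ₁`.) -/
theorem stmt_18 (σ κ θ lam₁ K₁ T : ℝ) (hσ : 0 < σ) (hκ : 0 < κ) (hθ : 0 < θ)
    (f : ℝ → ℝ)
    (B A₁₀ A₁₁ : ℝ → ℝ)
    (hB : ∀ t : ℝ, t ≤ T →
      HasDerivAt B ((κ + lam₁ * σ ^ 2) * B t + σ ^ 2 / 2 * (B t) ^ 2 - 1) t)
    (hA₁₁ : ∀ t : ℝ, t ≤ T →
      HasDerivAt A₁₁
        ((κ * θ * B t + κ + lam₁ * σ ^ 2 + σ ^ 2 * B t) * A₁₁ t + K₁ * f t) t)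
    (hA₁₀ : ∀ t : ℝ, t ≤ T →
      HasDerivAt A₁₀ (κ * θ * B t * A₁₀ t - κ * θ * A₁₁ t) t)
    (P₁ : ℝ → ℝ → ℝ)
    (hP₁ : ∀ t r : ℝ, P₁ t r = (A₁₀ t + A₁₁ t * r) * Real.exp (-(B t * r))) :
    ∀ t : ℝ, t ≤ T → ∀ r : ℝ,
      deriv (fun s => P₁ s r) t
        + (κ * (θ - r) - lam₁ * σ ^ 2 * r) * deriv (fun ρ => P₁ t ρ) r
        + σ ^ 2 * r / 2 * deriv (deriv (fun ρ => P₁ t ρ)) r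
        - r * P₁ t r
        = K₁ * f t * r * Real.exp (-(B t * r)) := by
  intro t ht r
  have hb := hB t ht
  have h11 := hA₁₁ t ht
  have h10 := hA₁₀ t ht
  set b' : ℝ := (κ + lam₁ * σ ^ 2) * B t + σ ^ 2 / 2 * (B t) ^ 2 - 1 with hb'
  set c' : ℝ := (κ * θ * B t + κ + lam₁ * σ ^ 2 + σ ^ 2 * B t) * A₁₁ t + K₁ * f t with hc'
  set a' : ℝ := κ * θ * B t * A₁₀ t - κ * θ * A₁₁ t with ha'
  -- time derivative
  have hdt : HasDerivAt (fun s => P₁ s r)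
      ((a' + c' * r) * Real.exp (-(B t * r))
        + (A₁₀ t + A₁₁ t * r) * (Real.exp (-(B t * r)) * (-(b' * r)))) t := by
    have heq : (fun s => P₁ s r) = fun s => (A₁₀ s + A₁₁ s * r) * Real.exp (-(B s * r)) :=
      funext fun s => hP₁ s r
    rw [heq]
    have h1 : HasDerivAt (fun s => A₁₀ s + A₁₁ s * r) (a' + c' * r) t :=
      h10.add (h11.mul_const r)
    have h2 : HasDerivAt (fun s => Real.exp (-(B s * r)))
        (Real.exp (-(B t * r)) * (-(b' * r))) t := by
      have := ((hb.mul_const r).neg).exp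
      simpa using this
    exact h1.mul h2
  -- first r-derivative
  have hg : ∀ ρ : ℝ, HasDerivAt (fun ρ => P₁ t ρ)
      ((A₁₁ t - B t * (A₁₀ t + A₁₁ t * ρ)) * Real.exp (-(B t * ρ))) ρ := by
    intro ρ
    have heq : (fun ρ => P₁ t ρ) = fun ρ => (A₁₀ t + A₁₁ t * ρ) * Real.exp (-(B t * ρ)) :=
      funext fun ρ => hP₁ t ρ
    rw [heq]
    have h1 : HasDerivAt (fun ρ : ℝ => A₁₀ t + A₁₁ t * ρ) (A₁₁ t) ρ := by
      simpa using ((hasDerivAt_id ρ).const_mul (A₁₁ t)).const_add (A₁₀ t)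
    have h2 : HasDerivAt (fun ρ : ℝ => Real.exp (-(B t * ρ)))
        (Real.exp (-(B t * ρ)) * (-(B t))) ρ := by
      have := (((hasDerivAt_id ρ).const_mul (B t)).neg).exp
      simpa using this
    have := h1.mul h2
    refine this.congr_deriv ?_
    ring
  have hderiv1 : deriv (fun ρ => P₁ t ρ)
      = fun ρ => (A₁₁ t - B t * (A₁₀ t + A₁₁ t * ρ)) * Real.exp (-(B t * ρ)) :=
    funext fun ρ => (hg ρ).deriv
  -- second r-derivative
  have hg2 : HasDerivAt (fun ρ => (A₁₁ t - B t * (A₁₀ t + A₁₁ t * ρ)) * Real.exp (-(B t * ρ)))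
      (((B t) ^ 2 * (A₁₀ t + A₁₁ t * r) - 2 * B t * A₁₁ t) * Real.exp (-(B t * r))) r := by
    have h1 : HasDerivAt (fun ρ : ℝ => A₁₁ t - B t * (A₁₀ t + A₁₁ t * ρ))
        (-(B t * A₁₁ t)) r := by
      have : HasDerivAt (fun ρ : ℝ => B t * (A₁₀ t + A₁₁ t * ρ)) (B t * A₁₁ t) r := by
        have h0 : HasDerivAt (fun ρ : ℝ => A₁₀ t + A₁₁ t * ρ) (A₁₁ t) r := by
          simpa using ((hasDerivAt_id r).const_mul (A₁₁ t)).const_add (A₁₀ t)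
        simpa using h0.const_mul (B t)
      simpa using this.const_sub (A₁₁ t)
    have h2 : HasDerivAt (fun ρ : ℝ => Real.exp (-(B t * ρ)))
        (Real.exp (-(B t * r)) * (-(B t))) r := by
      have := (((hasDerivAt_id r).const_mul (B t)).neg).exp
      simpa using this
    have := h1.mul h2
    refine this.congr_deriv ?_
    ring
  rw [hdt.deriv, hderiv1, hg2.deriv, hP₁ t r]
  simp only [hb', hc', ha']
  ring
end
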